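/- Normalization of the binary-model steady state: for all real a, b with 0 < a < b, all real ν > 0 and θ with 0 < θ ≤ 1, the family (P_{0,n} + P_{1,n})_{n∈ℕ} is summable and ∑_{n=0}^∞ (P_{0,n} + P_{1,n}) = 1. -/

import Mathlib

open scoped BigOperators

/-- Pochhammer symbol `(a)ₙ = a(a+1)⋯(a+n−1)`, `(a)₀ = 1`. -/
noncomputable def poch (a : ℝ) (n : ℕ) : ℝ := ∏ k ∈ Finset.range n, (a + k)

/-- Kummer's confluent hypergeometric function `M(a,b,z)`. -/
noncomputable def kummerM (a b z : ℝ) : ℝ :=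
  ∑' k : ℕ, poch a k / poch b k * z ^ k / (Nat.factorial k : ℝ)

/-- Steady-state probability `P_{0,n}` of the binary gene model. -/
noncomputable def P0 (a b ν θ : ℝ) (n : ℕ) : ℝ :=
  (b - a) / (kummerM a b (ν * (1 - θ)) * b) * (ν ^ n / (Nat.factorial n : ℝ)) *
    (poch a n / poch (1 + b) n) * kummerM (a + n) (1 + b + n) (-(ν * θ))

/-- Steady-state probability `P_{1,n}` of the binary gene model. -/
noncomputable def P1 (a b ν θ : ℝ) (n : ℕ) : ℝ :=
  a / (kummerM a b (ν * (1 - θ)) * b) * (ν ^ n / (Nat.factorial n : ℝ)) *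
    (poch (1 + a) n / poch (1 + b) n) * kummerM (1 + a + n) (1 + b + n) (-(ν * θ))

namespace BinaryAux

lemma poch_pos {a : ℝ} (ha : 0 < a) (n : ℕ) : 0 < poch a n :=
  Finset.prod_pos fun k _ => by positivity

lemma poch_le {a b : ℝ} (ha : 0 < a) (hab : a ≤ b) (n : ℕ) : poch a n ≤ poch b n :=
  Finset.prod_le_prod (fun k _ => by positivity) (fun k _ => by linarith)

lemma poch_add (a : ℝ) (m n : ℕ) : poch a (m + n) = poch a m * poch (a + m) n := by
  unfold poch
  rw [Finset.prod_range_add]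
  congr 1
  refine Finset.prod_congr rfl fun k _ => ?_
  push_cast
  ring

lemma poch_succ_right (a : ℝ) (n : ℕ) : poch a (n + 1) = poch a n * (a + n) :=
  Finset.prod_range_succ _ n

lemma poch_succ_left (a : ℝ) (n : ℕ) : poch a (n + 1) = a * poch (a + 1) n := by
  unfold poch
  rw [Finset.prod_range_succ']
  have h0 : a + ((0:ℕ):ℝ) = a := by simp
  rw [h0, mul_comm a]
  congr 1
  exact Finset.prod_congr rfl fun k _ => by push_cast; ring

lemma shift_id (a : ℝ) (m : ℕ) : a * poch (1 + a) m = poch a m * (a + m) := by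
  have h1 := poch_succ_left a m
  have h2 := poch_succ_right a m
  rw [add_comm (1 : ℝ) a]
  rw [← h1, h2]

/-- summability of the Kummer series when `0 < a ≤ b` -/
lemma kummer_summable {a b : ℝ} (ha : 0 < a) (hab : a ≤ b) (z : ℝ) :
    Summable fun k : ℕ => poch a k / poch b k * z ^ k / (Nat.factorial k : ℝ) := by
  refine Summable.of_norm_bounded (Real.summable_pow_div_factorial |z|) fun k => ?_
  have h1 := poch_pos ha k
  have h2 := poch_pos (lt_of_lt_of_le ha hab) k
  have hr1 : poch a k / poch b k ≤ 1 := (div_le_one h2).2 (poch_le ha hab k)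
  have hr0 : 0 ≤ poch a k / poch b k := le_of_lt (div_pos h1 h2)
  have hker : ‖poch a k / poch b k * z ^ k / (Nat.factorial k : ℝ)‖
      = poch a k / poch b k * |z| ^ k / (Nat.factorial k : ℝ) := by
    rw [Real.norm_eq_abs, abs_div, abs_mul, abs_pow,
      abs_of_nonneg hr0, abs_of_nonneg (by positivity : (0:ℝ) ≤ (Nat.factorial k : ℝ))]
  rw [hker]
  have hfac : (0:ℝ) < (Nat.factorial k : ℝ) := by positivity
  calc poch a k / poch b k * |z| ^ k / (Nat.factorial k : ℝ)
      ≤ 1 * |z| ^ k / (Nat.factorial k : ℝ) := by gcongr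
    _ = |z| ^ k / (Nat.factorial k : ℝ) := by ring

lemma kummer_ge_one {a b : ℝ} (ha : 0 < a) (hab : a ≤ b) {z : ℝ} (hz : 0 ≤ z) :
    1 ≤ kummerM a b z := by
  have hs := kummer_summable ha hab z
  have h0 : poch a 0 / poch b 0 * z ^ 0 / (Nat.factorial 0 : ℝ) = 1 := by
    simp [poch]
  calc (1:ℝ) = poch a 0 / poch b 0 * z ^ 0 / (Nat.factorial 0 : ℝ) := h0.symm
    _ ≤ ∑' k : ℕ, poch a k / poch b k * z ^ k / (Nat.factorial k : ℝ) := by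
        refine Summable.le_tsum hs 0 fun k _ => ?_
        have h1 := poch_pos ha k
        have h2 := poch_pos (lt_of_lt_of_le ha hab) k
        positivity
    _ = kummerM a b z := rfl

/-- The double family. -/
noncomputable def F (c d x y : ℝ) (p : ℕ × ℕ) : ℝ :=
  poch c (p.1 + p.2) / poch d (p.1 + p.2) * (x ^ p.1 * y ^ p.2) /
    ((Nat.factorial p.1 : ℝ) * (Nat.factorial p.2 : ℝ))

lemma F_summable {c d : ℝ} (hc : 0 < c) (hcd : c ≤ d) (x y : ℝ) :
    Summable (F c d x y) := by
  have hbig : Summable fun p : ℕ × ℕ =>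
      (|x| ^ p.1 / (Nat.factorial p.1 : ℝ)) * (|y| ^ p.2 / (Nat.factorial p.2 : ℝ)) :=
    (Real.summable_pow_div_factorial |x|).mul_of_nonneg
      (Real.summable_pow_div_factorial |y|)
      (fun n => by positivity) (fun n => by positivity)
  refine Summable.of_norm_bounded hbig fun p => ?_
  have h1 := poch_pos hc (p.1 + p.2)
  have h2 := poch_pos (lt_of_lt_of_le hc hcd) (p.1 + p.2)
  have hr1 : poch c (p.1 + p.2) / poch d (p.1 + p.2) ≤ 1 := (div_le_one h2).2 (poch_le hc hcd _)
  have hr0 : 0 ≤ poch c (p.1 + p.2) / poch d (p.1 + p.2) := le_of_lt (div_pos h1 h2)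
  have hker : ‖F c d x y p‖
      = poch c (p.1 + p.2) / poch d (p.1 + p.2) * (|x| ^ p.1 * |y| ^ p.2) /
        ((Nat.factorial p.1 : ℝ) * (Nat.factorial p.2 : ℝ)) := by
    unfold F
    rw [Real.norm_eq_abs, abs_div, abs_mul, abs_mul, abs_pow, abs_pow,
      abs_of_nonneg hr0, abs_of_nonneg (by positivity : (0:ℝ) ≤ ((Nat.factorial p.1 : ℝ) * (Nat.factorial p.2 : ℝ)))]
  rw [hker]
  have hfac : (0:ℝ) < (Nat.factorial p.1 : ℝ) * (Nat.factorial p.2 : ℝ) := by positivity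
  calc poch c (p.1 + p.2) / poch d (p.1 + p.2) * (|x| ^ p.1 * |y| ^ p.2) /
        ((Nat.factorial p.1 : ℝ) * (Nat.factorial p.2 : ℝ))
      ≤ 1 * (|x| ^ p.1 * |y| ^ p.2) / ((Nat.factorial p.1 : ℝ) * (Nat.factorial p.2 : ℝ)) := by
        gcongr
    _ = (|x| ^ p.1 / (Nat.factorial p.1 : ℝ)) * (|y| ^ p.2 / (Nat.factorial p.2 : ℝ)) := by
        ring

lemma F_fiber (c d x y : ℝ) (n : ℕ) :
    (∑' k : ℕ, F c d x y (n, k)) =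
      poch c n / poch d n * (x ^ n / (Nat.factorial n : ℝ)) * kummerM (c + n) (d + n) y := by
  unfold kummerM
  rw [← tsum_mul_left]
  refine tsum_congr fun k => ?_
  unfold F
  simp only
  rw [poch_add c n k, poch_add d n k]
  field_simp

/-- the inner antidiagonal sum -/
lemma antidiag_sum (x y : ℝ) (m : ℕ) :
    ∑ kl ∈ Finset.HasAntidiagonal.antidiagonal m,
      (x ^ kl.1 * y ^ kl.2) / ((Nat.factorial kl.1 : ℝ) * (Nat.factorial kl.2 : ℝ))
      = (x + y) ^ m / (Nat.factorial m : ℝ) := by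
  rw [Finset.Nat.sum_antidiagonal_eq_sum_range_succ_mk, add_pow, Finset.sum_div]
  refine Finset.sum_congr rfl fun k hk => ?_
  have hkm : k ≤ m := Nat.lt_succ_iff.mp (Finset.mem_range.mp hk)
  have hfact : (Nat.choose m k * Nat.factorial k * Nat.factorial (m - k) : ℕ) = Nat.factorial m :=
    Nat.choose_mul_factorial_mul_factorial hkm
  have hfR : (Nat.choose m k : ℝ) * (Nat.factorial k : ℝ) * (Nat.factorial (m - k) : ℝ)
      = (Nat.factorial m : ℝ) := by
    exact_mod_cast congrArg (Nat.cast : ℕ → ℝ) hfact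
  have h1 : (0:ℝ) < (Nat.factorial k : ℝ) := by positivity
  have h2 : (0:ℝ) < (Nat.factorial (m - k) : ℝ) := by positivity
  have h3 : (0:ℝ) < (Nat.factorial m : ℝ) := by positivity
  field_simp
  linear_combination (-(x ^ k * y ^ (m - k))) * hfR

lemma F_diag {c d : ℝ} (hc : 0 < c) (hcd : c ≤ d) (x y : ℝ) :
    (∑' p : ℕ × ℕ, F c d x y p)
      = ∑' m : ℕ, poch c m / poch d m * (x + y) ^ m / (Nat.factorial m : ℝ) := by
  have hF := F_summable hc hcd x y
  have key : (∑' p : ℕ × ℕ, F c d x y p)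
      = ∑' m : ℕ, ∑ kl ∈ Finset.HasAntidiagonal.antidiagonal m, F c d x y kl := by
    rw [← Finset.HasAntidiagonal.sigmaAntidiagonalEquivProd.tsum_eq (F c d x y)]
    conv_rhs => congr; ext; rw [← Finset.sum_finset_coe, ← tsum_fintype (L := SummationFilter.unconditional _)]
    exact Summable.tsum_sigma' (fun m => (hasSum_fintype _).summable)
      (Finset.HasAntidiagonal.sigmaAntidiagonalEquivProd.summable_iff.mpr hF)
  rw [key]
  refine tsum_congr fun m => ?_
  have : ∑ kl ∈ Finset.HasAntidiagonal.antidiagonal m, F c d x y kl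
      = ∑ kl ∈ Finset.HasAntidiagonal.antidiagonal m, poch c m / poch d m *
        ((x ^ kl.1 * y ^ kl.2) / ((Nat.factorial kl.1 : ℝ) * (Nat.factorial kl.2 : ℝ))) := by
    refine Finset.sum_congr rfl fun kl hkl => ?_
    have hm : kl.1 + kl.2 = m := Finset.HasAntidiagonal.mem_antidiagonal.mp hkl
    unfold F
    rw [hm]
    ring
  rw [this, ← Finset.mul_sum, antidiag_sum]
  ring

/-- the series rearrangement identity -/
lemma key_rearrange {c d : ℝ} (hc : 0 < c) (hcd : c ≤ d) (x y : ℝ) :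
    Summable (fun n : ℕ => poch c n / poch d n * (x ^ n / (Nat.factorial n : ℝ)) *
      kummerM (c + n) (d + n) y) ∧
    (∑' n : ℕ, poch c n / poch d n * (x ^ n / (Nat.factorial n : ℝ)) *
      kummerM (c + n) (d + n) y)
      = ∑' m : ℕ, poch c m / poch d m * (x + y) ^ m / (Nat.factorial m : ℝ) := by
  have hF := F_summable hc hcd x y
  have hsum : Summable (fun n : ℕ => ∑' k : ℕ, F c d x y (n, k)) := hF.prod
  have hfib : (fun n : ℕ => ∑' k : ℕ, F c d x y (n, k))
      = fun n : ℕ => poch c n / poch d n * (x ^ n / (Nat.factorial n : ℝ)) *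
        kummerM (c + n) (d + n) y := funext fun n => F_fiber c d x y n
  constructor
  · rw [← hfib]; exact hsum
  · rw [← hfib, ← Summable.tsum_prod' hF (fun n => hF.prod_factor n), F_diag hc hcd x y]

lemma combine {a b : ℝ} (ha : 0 < a) (hb : 0 < b) (m : ℕ) :
    (b - a) * (poch a m / poch (1 + b) m) + a * (poch (1 + a) m / poch (1 + b) m)
      = b * (poch a m / poch b m) := by
  have h1 : a * poch (1 + a) m = poch a m * (a + m) := shift_id a m
  have h2 : b * poch (1 + b) m = poch b m * (b + m) := shift_id b m
  have hpb := (poch_pos hb m).ne'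
  have hp1b := (poch_pos (by linarith : (0:ℝ) < 1 + b) m).ne'
  field_simp
  linear_combination poch b m * h1 - poch a m * h2

end BinaryAux

open BinaryAux in
/-- Normalization of the binary-model steady state. -/
theorem binary_model_normalization (a b ν θ : ℝ) (ha : 0 < a) (hab : a < b)
    (hν : 0 < ν) (hθ0 : 0 < θ) (hθ1 : θ ≤ 1) :
    Summable (fun n : ℕ => P0 a b ν θ n + P1 a b ν θ n) ∧
    (∑' n : ℕ, (P0 a b ν θ n + P1 a b ν θ n)) = 1 := by
  have hb : 0 < b := lt_trans ha hab
  set z := ν * (1 - θ) with hz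
  have hz0 : 0 ≤ z := by
    have : 0 ≤ 1 - θ := by linarith
    positivity
  set C := kummerM a b z with hC
  have hC1 : 1 ≤ C := kummer_ge_one ha (le_of_lt hab) hz0
  have hCpos : 0 < C := lt_of_lt_of_le one_pos hC1
  have hCb : C * b ≠ 0 := by positivity
  -- rearrangements for the two families
  have hd0 : a ≤ 1 + b := by linarith
  have hd1 : (1:ℝ) + a ≤ 1 + b := by linarith
  have ha1 : (0:ℝ) < 1 + a := by linarith
  have hxy : ν + -(ν * θ) = z := by rw [hz]; ring
  obtain ⟨hs0, he0⟩ := key_rearrange ha hd0 ν (-(ν * θ))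
  obtain ⟨hs1, he1⟩ := key_rearrange ha1 hd1 ν (-(ν * θ))
  rw [hxy] at he0 he1
  -- P0 = c0 * g0, P1 = c1 * g1
  have hP0 : (fun n : ℕ => P0 a b ν θ n)
      = fun n : ℕ => (b - a) / (C * b) *
        (poch a n / poch (1 + b) n * (ν ^ n / (Nat.factorial n : ℝ)) *
          kummerM (a + n) (1 + b + n) (-(ν * θ))) := by
    funext n
    unfold P0
    rw [← hz, ← hC]
    ring
  have hP1 : (fun n : ℕ => P1 a b ν θ n)
      = fun n : ℕ => a / (C * b) *
        (poch (1 + a) n / poch (1 + b) n * (ν ^ n / (Nat.factorial n : ℝ)) *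
          kummerM (1 + a + n) (1 + b + n) (-(ν * θ))) := by
    funext n
    unfold P1
    rw [← hz, ← hC]
    ring
  have hsP0 : Summable (fun n : ℕ => P0 a b ν θ n) := by
    rw [hP0]; exact hs0.mul_left _
  have hsP1 : Summable (fun n : ℕ => P1 a b ν θ n) := by
    rw [hP1]; exact hs1.mul_left _
  refine ⟨hsP0.add hsP1, ?_⟩
  rw [Summable.tsum_add hsP0 hsP1]
  have ht0 : (∑' n : ℕ, P0 a b ν θ n)
      = (b - a) / (C * b) * ∑' m : ℕ, poch a m / poch (1 + b) m * z ^ m / (Nat.factorial m : ℝ) := by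
    rw [hP0, tsum_mul_left, he0]
  have ht1 : (∑' n : ℕ, P1 a b ν θ n)
      = a / (C * b) * ∑' m : ℕ, poch (1 + a) m / poch (1 + b) m * z ^ m / (Nat.factorial m : ℝ) := by
    rw [hP1, tsum_mul_left, he1]
  rw [ht0, ht1]
  -- combine the two series
  have hsk0 : Summable fun m : ℕ => poch a m / poch (1 + b) m * z ^ m / (Nat.factorial m : ℝ) :=
    kummer_summable ha hd0 z
  have hsk1 : Summable fun m : ℕ => poch (1 + a) m / poch (1 + b) m * z ^ m / (Nat.factorial m : ℝ) :=
    kummer_summable ha1 hd1 z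
  rw [← tsum_mul_left, ← tsum_mul_left,
    ← Summable.tsum_add (hsk0.mul_left _) (hsk1.mul_left _)]
  have hfinal : ∀ m : ℕ,
      (b - a) / (C * b) * (poch a m / poch (1 + b) m * z ^ m / (Nat.factorial m : ℝ))
        + a / (C * b) * (poch (1 + a) m / poch (1 + b) m * z ^ m / (Nat.factorial m : ℝ))
      = C⁻¹ * (poch a m / poch b m * z ^ m / (Nat.factorial m : ℝ)) := by
    intro m
    have hb' : b ≠ 0 := ne_of_gt hb
    have hC' : C ≠ 0 := ne_of_gt hCpos
    have : (b - a) / (C * b) * (poch a m / poch (1 + b) m)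
        + a / (C * b) * (poch (1 + a) m / poch (1 + b) m)
        = C⁻¹ * (poch a m / poch b m) := by
      have h1 : a * poch (1 + a) m = poch a m * (a + m) := shift_id a m
      have h2 : b * poch (1 + b) m = poch b m * (b + m) := shift_id b m
      have hp1b := (poch_pos (by linarith : (0:ℝ) < 1 + b) m).ne'
      have hpb := (poch_pos hb m).ne'
      field_simp
      linear_combination poch b m * h1 - poch a m * h2
    calc (b - a) / (C * b) * (poch a m / poch (1 + b) m * z ^ m / (Nat.factorial m : ℝ))
          + a / (C * b) * (poch (1 + a) m / poch (1 + b) m * z ^ m / (Nat.factorial m : ℝ))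
        = ((b - a) / (C * b) * (poch a m / poch (1 + b) m)
            + a / (C * b) * (poch (1 + a) m / poch (1 + b) m))
            * (z ^ m / (Nat.factorial m : ℝ)) := by ring
      _ = C⁻¹ * (poch a m / poch b m) * (z ^ m / (Nat.factorial m : ℝ)) := by rw [this]
      _ = C⁻¹ * (poch a m / poch b m * z ^ m / (Nat.factorial m : ℝ)) := by ring
  rw [tsum_congr hfinal, tsum_mul_left]
  have : (∑' m : ℕ, poch a m / poch b m * z ^ m / (Nat.factorial m : ℝ)) = C := rfl
  rw [this, inv_mul_cancel₀ (ne_of_gt hCpos)]
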